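/- Let G act 3-discontinuously and 2-cocompactly on a compactum T, with A the fixed discrete G-orbit of entourages. Then for every d > 0, every parabolic point p is the unique accumulation point in T̃ = T ⊔ A of the d-neighborhood N_d(T_{A,k}(p)) of the horosphere T_{A,k}(p). -/

import Mathlib

namespace RHG

/-- Triples with pairwise distinct components. -/
def distinct3 {X : Type*} : Set (X × X × X) :=
  {x | x.1 ≠ x.2.1 ∧ x.1 ≠ x.2.2 ∧ x.2.1 ≠ x.2.2}

/-- Pairs with distinct components. -/
def distinct2 {X : Type*} : Set (X × X) := {x | x.1 ≠ x.2}

/-- The action `act` of `G` on `X` is 3-discontinuous: the induced action on the space of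
(ordered) triples of pairwise distinct points is properly discontinuous. -/
def ThreeDisc {G X : Type*} [TopologicalSpace X] (act : G → X → X) : Prop :=
  ∀ K : Set (X × X × X), IsCompact K → K ⊆ distinct3 →
    Set.Finite {g : G |
      (((fun x : X × X × X => (act g x.1, act g x.2.1, act g x.2.2)) '' K) ∩ K).Nonempty}

/-- The action `act` of `G` on `X` is 2-cocompact: the action on the space of (ordered) pairs
of distinct points is cocompact. -/
def TwoCocompact {G X : Type*} [TopologicalSpace X] (act : G → X → X) : Prop :=
  ∃ K : Set (X × X), IsCompact K ∧ K ⊆ distinct2 ∧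
    ∀ x : X × X, x ∈ (distinct2 : Set (X × X)) → ∃ g : G, (act g x.1, act g x.2) ∈ K

/-- `ρ` is an action of the group `G` on `T` by homeomorphisms. -/
structure IsTopAction (G : Type*) [Group G] (T : Type*) [TopologicalSpace T]
    (ρ : G → T ≃ₜ T) : Prop where
  map_one : ρ 1 = Homeomorph.refl T
  map_mul : ∀ g h : G, ρ (g * h) = (ρ h).trans (ρ g)

/-- The stabilizer of a point for an action by homeomorphisms. -/
def actStab {G : Type*} [Group G] {T : Type*} [TopologicalSpace T]
    (ρ : G → T ≃ₜ T) (hρ : IsTopAction G T ρ) (p : T) : Subgroup G where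
  carrier := {g : G | ρ g p = p}
  one_mem' := by
    simp only [Set.mem_setOf_eq, hρ.map_one, Homeomorph.refl_apply, id_eq]
  mul_mem' := by
    intro a b ha hb
    simp only [Set.mem_setOf_eq] at *
    rw [hρ.map_mul, Homeomorph.trans_apply, hb, ha]
  inv_mem' := by
    intro a ha
    simp only [Set.mem_setOf_eq] at *
    have h1 : ρ (a⁻¹ * a) p = ρ a⁻¹ (ρ a p) := by
      rw [hρ.map_mul, Homeomorph.trans_apply]
    rw [inv_mul_cancel, hρ.map_one, ha] at h1
    simpa using h1.symm

/-- A parabolic point: its stabilizer is infinite and it is the unique fixed point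
of its stabilizer. -/
def IsParabolicPt {G : Type*} [Group G] {T : Type*} [TopologicalSpace T]
    (ρ : G → T ≃ₜ T) (hρ : IsTopAction G T ρ) (p : T) : Prop :=
  Set.Infinite ((actStab ρ hρ p : Set G)) ∧
    ∀ q : T, (∀ g ∈ actStab ρ hρ p, ρ g q = q) → q = p

/-- `T` contains at least three points. -/
def HasThreePts (T : Type*) : Prop := ∃ x y z : T, x ≠ y ∧ x ≠ z ∧ y ≠ z

end RHG

namespace RHG

/-- An entourage of a topological space `T`: a symmetric neighborhood of the diagonal
in `T × T` (identified with a neighborhood of the diagonal in the symmetric square). -/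
structure Entourage (T : Type*) [TopologicalSpace T] where
  carrier : Set (T × T)
  symm' : ∀ x y : T, (x, y) ∈ carrier → (y, x) ∈ carrier
  mem_nhds' : ∀ x : T, carrier ∈ nhds (x, x)

variable {T : Type*} [TopologicalSpace T]

/-- A set is `e`-small if its `Δ_e`-diameter is at most 1, i.e. any two of its points
form a pair belonging to `e`. -/
def eSmall (e : Entourage T) (s : Set T) : Prop :=
  ∀ x ∈ s, ∀ y ∈ s, (x, y) ∈ e.carrier

/-- `Δ_e (x, y) ≤ k` for the maximal metric `Δ_e` with `Δ_e ≤ 1` on pairs of `e`: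
there is a chain of length `k` from `x` to `y` with consecutive pairs in `e`. -/
def eDistLE (e : Entourage T) (k : ℕ) (x y : T) : Prop :=
  ∃ c : ℕ → T, c 0 = x ∧ c k = y ∧ ∀ i < k, (c i, c (i + 1)) ∈ e.carrier

/-- Two entourages are unlinked if `T` is the union of an `a`-small and a `b`-small set. -/
def EntUnlinked (a b : Entourage T) : Prop :=
  ∃ sa sb : Set T, eSmall a sa ∧ eSmall b sb ∧ sa ∪ sb = Set.univ

/-- Two entourages are linked if they are not unlinked. -/
def EntLinked (a b : Entourage T) : Prop := ¬ EntUnlinked a b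

/-- Standing convention on entourages: self-linked, and `Δ_e`-diameter of `T` greater
than `4`. -/
def GoodEnt (e : Entourage T) : Prop :=
  EntLinked e e ∧ ∃ x y : T, ¬ eDistLE e 4 x y

/-- The shadow `sh_a b`: the intersection of all `a`-small sets with `b`-small complement. -/
def shadow (a b : Entourage T) : Set T :=
  ⋂₀ {s : Set T | eSmall a s ∧ eSmall b sᶜ}

/-- The betweenness relation `a − b − c (k)`:
`a ⋈ b ⋈ c` and `Δ_b(sh_b a, sh_b c) > k`. -/
def Btw (a b c : Entourage T) (k : ℕ) : Prop :=
  EntUnlinked a b ∧ EntUnlinked b c ∧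
    ∀ x ∈ shadow b a, ∀ y ∈ shadow b c, ¬ eDistLE b k x y

/-- The betweenness relation `a − b − p (k)` for a point `p ∈ T`:
`a ⋈ b` and `Δ_b(sh_b a, b₀) > k` for every `b`-small neighborhood `b₀` of `p`. -/
def BtwP (a b : Entourage T) (p : T) (k : ℕ) : Prop :=
  EntUnlinked a b ∧
    ∀ s : Set T, eSmall b s → s ∈ nhds p → ∀ x ∈ shadow b a, ∀ y ∈ s, ¬ eDistLE b k x y

/-- The betweenness relation `p − b − q (k)` for points `p, q ∈ T`:
`Δ_b(b₁, b₂) > k` for all `b`-small neighborhoods `b₁` of `p` and `b₂` of `q`. -/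
def BtwPP (p : T) (b : Entourage T) (q : T) (k : ℕ) : Prop :=
  ∀ s₁ s₂ : Set T, eSmall b s₁ → s₁ ∈ nhds p → eSmall b s₂ → s₂ ∈ nhds q →
    ∀ x ∈ s₁, ∀ y ∈ s₂, ¬ eDistLE b k x y

/-- The image of an entourage under a homeomorphism of `T`. -/
def entMap (φ : T ≃ₜ T) (e : Entourage T) : Entourage T where
  carrier := (fun x : T × T => ((φ.symm x.1 : T), (φ.symm x.2 : T))) ⁻¹' e.carrier
  symm' := fun x y h => e.symm' _ _ h
  mem_nhds' := fun x => by
    have hcont : Continuous fun x : T × T => ((φ.symm x.1 : T), (φ.symm x.2 : T)) :=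
      (φ.symm.continuous.comp continuous_fst).prodMk (φ.symm.continuous.comp continuous_snd)
    exact hcont.continuousAt.preimage_mem_nhds (e.mem_nhds' (φ.symm x))

/-- The orbit of an entourage under an action of `G` on `T` by homeomorphisms. -/
def entOrbit {G : Type*} [Group G] (ρ : G → T ≃ₜ T) (a₀ : Entourage T) :
    Set (Entourage T) :=
  {e | ∃ g : G, e = entMap (ρ g) a₀}

/-- A set of entourages is discrete if every entourage is linked with only finitely many
of its elements. -/
def DiscreteEnts (A : Set (Entourage T)) : Prop :=
  ∀ w : Entourage T, Set.Finite {a ∈ A | EntLinked a w}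

/-- `d_A(a, b) ≤ n` in the graph of entourages: there is a walk of length `n` in `A`
from `a` to `b` with consecutive vertices linked. -/
def AdistLE (A : Set (Entourage T)) (n : ℕ) (a b : Entourage T) : Prop :=
  ∃ c : ℕ → Entourage T, c 0 = a ∧ c n = b ∧ (∀ i ≤ n, c i ∈ A) ∧
    ∀ i < n, EntLinked (c i) (c (i + 1))

/-- The `d`-neighborhood of a subset `S` inside the graph of entourages on `A`. -/
def Anbhd (A : Set (Entourage T)) (d : ℕ) (S : Set (Entourage T)) : Set (Entourage T) :=
  {a ∈ A | ∃ b ∈ S, AdistLE A d a b}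

/-- The horosphere `T_{A,k}(p)`: the entourages of `A` which are not separated
from `p` by any element of `A`. -/
def horosphere (A : Set (Entourage T)) (k : ℕ) (p : T) : Set (Entourage T) :=
  {e ∈ A | ¬ ∃ a ∈ A, BtwP e a p k}

/-- `Ψ_k(a,b) = {c ∈ A : a − c − b (k)}`. -/
def Psi (A : Set (Entourage T)) (k : ℕ) (a b : Entourage T) : Set (Entourage T) :=
  {c ∈ A | Btw a c b k}

/-- The topology on `T̃ = T ⊔ A`, generated by the singletons of elements of `A` and
the convex hulls `õ = o ∪ {e ∈ A : oᶜ is e-small}` of open sets `o ⊆ T`. -/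
def tildeTop (A : Set (Entourage T)) : TopologicalSpace (T ⊕ ↥A) :=
  TopologicalSpace.generateFrom
    ({s | ∃ e : ↥A, s = {Sum.inr e}} ∪
      {s | ∃ o : Set T, IsOpen o ∧
        s = Sum.inl '' o ∪ Sum.inr '' {e : ↥A | eSmall (↑e) oᶜ}})

/-- The set of accumulation points of a set `S` in a topological space. -/
def accPts {X : Type*} [TopologicalSpace X] (S : Set X) : Set X :=
  {x | x ∈ closure (S \ {x})}

/-- The extension of the action of `G` on `T` to `T̃ = T ⊔ A`. -/
def tildeAct {G : Type*} [Group G] (ρ : G → T ≃ₜ T) (A : Set (Entourage T))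
    (hinv : ∀ g : G, ∀ a ∈ A, entMap (ρ g) a ∈ A) (g : G) :
    T ⊕ ↥A → T ⊕ ↥A :=
  fun x => match x with
  | Sum.inl t => Sum.inl (ρ g t)
  | Sum.inr e => Sum.inr ⟨entMap (ρ g) ↑e, hinv g (↑e) e.2⟩

/-- The `m`-separation property for a set of entourages. -/
def Separates (A : Set (Entourage T)) (m : ℕ) : Prop :=
  ∀ p q : T, p ≠ q → ∃ a ∈ A, BtwPP p a q m

/-- `A` generates the filter of entourages. -/
def GeneratesFilter (A : Set (Entourage T)) : Prop :=
  ∀ u : Entourage T, ∃ (n : ℕ) (f : Fin n → Entourage T),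
    (∀ i, f i ∈ A) ∧ (⋂ i, (f i).carrier) ⊆ u.carrier

/-- `γ` restricted to the integer interval `[i, j]` is a `c`-quasigeodesic of the graph
of entourages on `A`. -/
def IsQGOn (A : Set (Entourage T)) (c : ℝ) (i j : ℕ) (γ : ℕ → Entourage T) : Prop :=
  ∀ s t : ℕ, i ≤ s → s ≤ j → i ≤ t → t ≤ j →
    (∀ m : ℕ, AdistLE A m (γ s) (γ t) → (1 / c) * |(s : ℝ) - (t : ℝ)| - c < (m : ℝ)) ∧
    ∃ m : ℕ, AdistLE A m (γ s) (γ t) ∧ (m : ℝ) ≤ c * |(s : ℝ) - (t : ℝ)| + c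

/-- `γ : [0, n] → A` is a `c`-quasigeodesic of the graph of entourages on `A`. -/
def IsQG (A : Set (Entourage T)) (c : ℝ) (n : ℕ) (γ : ℕ → Entourage T) : Prop :=
  (∀ i ≤ n, γ i ∈ A) ∧ IsQGOn A c 0 n γ

/-- `γ : [0, n] → A` is a curve (edge-path) in the graph of entourages on `A`. -/
def IsCurve (A : Set (Entourage T)) (n : ℕ) (γ : ℕ → Entourage T) : Prop :=
  (∀ i ≤ n, γ i ∈ A) ∧ ∀ i < n, EntLinked (γ i) (γ (i + 1))

/-- `γ : [0, n] → A` is an `(l, c)`-tight curve (with horosphere parameter `k` and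
neighborhood radius `r`): every subinterval of length at most `l` is a `c`-quasigeodesic,
and if more than `l` points of the image of a subinterval lie in the `r`-neighborhood of
a horosphere of a parabolic point, then the endpoints of the subinterval are at
`d_A`-distance greater than `l/c − c`. -/
def IsTight (A : Set (Entourage T)) (k l : ℕ) (c : ℝ) (r n : ℕ)
    (γ : ℕ → Entourage T) : Prop :=
  IsCurve A n γ ∧
  (∀ i j : ℕ, i ≤ j → j ≤ n → j - i ≤ l → IsQGOn A c i j γ) ∧
  (∀ i j : ℕ, i ≤ j → j ≤ n → ∀ p : T, (horosphere A k p).Infinite →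
    l < Set.ncard ((γ '' Set.Icc i j) ∩ Anbhd A r (horosphere A k p)) →
    ∀ m : ℕ, AdistLE A m (γ i) (γ j) → (l : ℝ) / c - c < (m : ℝ))

/-- The vertex `γ i` of the curve `γ` is `d`-horospherical (with constant `e`): `γ`
contains subsegments `[i₁, i]` and `[i, i₂]` of length greater than `e` lying in the
`d`-neighborhood of the horosphere of a parabolic point. -/
def IsHoroVertex (A : Set (Entourage T)) (k d e n : ℕ) (γ : ℕ → Entourage T)
    (i : ℕ) : Prop :=
  ∃ (p : T) (i₁ i₂ : ℕ), (horosphere A k p).Infinite ∧ i₁ ≤ i ∧ i ≤ i₂ ∧ i₂ ≤ n ∧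
    e < i - i₁ ∧ e < i₂ - i ∧
    ∀ m : ℕ, i₁ ≤ m → m ≤ i₂ → γ m ∈ Anbhd A d (horosphere A k p)

end RHG

namespace RHG

/-!
An element of the horosphere of `p` that is not small on `oᶜ`, for an open `o ∋ p`, is separated
from `p` by none of the entourages that separate the points of the compact set `oᶜ` from `p`;
compactness lets one entourage `w` witness this, so all such elements are linked with `w`, and
discreteness of `A` leaves finitely many. Discreteness also bounds the number of neighbours in the
graph of entourages, so the same finiteness holds for every `N_d`: the infinite set `N_d`
converges to `p` in `T̃`. Self-linkedness keeps its elements away from every other point.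
-/

section

open Set Filter Topology

variable {T : Type*} [TopologicalSpace T]

/-- `N` converges to `p` in `T̃`: every basic neighbourhood `õ` of `p` contains all but finitely
many elements of `N`. -/
def EntTendsto (N : Set (Entourage T)) (p : T) : Prop :=
  ∀ o : Set T, IsOpen o → p ∈ o → {e ∈ N | ¬ eSmall e oᶜ}.Finite

lemma EntTendsto.mono {N N' : Set (Entourage T)} {p : T} (h : EntTendsto N p) (hN : N' ⊆ N) :
    EntTendsto N' p :=
  fun o ho hpo => (h o ho hpo).subset fun _ he => ⟨hN he.1, he.2⟩

lemma eSmall.mono {e : Entourage T} {s t : Set T} (h : eSmall e t) (hst : s ⊆ t) :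
    eSmall e s :=
  fun x hx y hy => h x (hst hx) y (hst hy)

lemma eSmall_singleton (e : Entourage T) (x : T) : eSmall e {x} := by
  intro y hy z hz
  rw [mem_singleton_iff.mp hy, mem_singleton_iff.mp hz]
  exact mem_of_mem_nhds (e.mem_nhds' x)

lemma exists_mem_notMem_of_not_eSmall {e : Entourage T} {s t : Set T} (hs : ¬ eSmall e s)
    (ht : eSmall e t) : ∃ u ∈ s, u ∉ t := by
  by_contra! h
  exact hs (ht.mono h)

lemma Entourage.exists_eSmall_mem_nhds (e : Entourage T) (x : T) : ∃ s ∈ 𝓝 x, eSmall e s := by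
  obtain ⟨u, hu, v, hv, huv⟩ := mem_nhds_prod_iff.mp (e.mem_nhds' x)
  exact ⟨u ∩ v, inter_mem hu hv, fun y hy z hz => huv ⟨hy.1, hz.2⟩⟩

lemma eDistLE_mono {e : Entourage T} {k l : ℕ} (hkl : k ≤ l) {x y : T}
    (h : eDistLE e k x y) : eDistLE e l x y := by
  obtain ⟨c, hc0, hck, hc⟩ := h
  refine ⟨fun i => c (min i k), by simpa using hc0, by simp [hkl, hck], fun i _ => ?_⟩
  rcases lt_or_ge i k with hik | hki
  · simpa [min_eq_left hik.le, min_eq_left (Nat.succ_le_of_lt hik)] using hc i hik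
  · simpa [min_eq_right hki, min_eq_right (hki.trans i.le_succ), hck]
      using mem_of_mem_nhds (e.mem_nhds' y)

lemma shadow_subset {a b : Entourage T} {s t : Set T} (hs : eSmall b s) (ht : eSmall a t)
    (hst : sᶜ ⊆ t) : shadow a b ⊆ t :=
  sInter_subset_of_mem ⟨ht, hs.mono (compl_subset_comm.mp hst)⟩

lemma btwP_of_shadow_subset {e a : Entourage T} {x p : T} {k m : ℕ} (hxp : BtwPP x a p m)
    (hkm : k ≤ m) {s : Set T} (hs : s ∈ 𝓝 x) (hsa : eSmall a s) (hea : EntUnlinked e a)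
    (hsh : shadow a e ⊆ s) : BtwP e a p k :=
  ⟨hea, fun s' hs'a hs' y hy z hz hyz =>
    hxp s s' hsa hs hs'a hs' y (hsh hy) z hz (eDistLE_mono hkm hyz)⟩

lemma EntLinked.exists_isOpen_not_eSmall_compl [T1Space T] {e : Entourage T}
    (he : EntLinked e e) (q : T) : ∃ o, IsOpen o ∧ q ∈ o ∧ ¬ eSmall e oᶜ := by
  by_contra! h
  refine he ⟨{q}, {q}ᶜ, eSmall_singleton e q, fun x hx y hy => ?_, union_compl_self _⟩
  have hxy := h {x, y}ᶜ (Set.toFinite _).isClosed.isOpen_compl (by simp_all [eq_comm])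
  exact hxy x (by simp) y (by simp)

lemma exists_symm_nhds_diag_lebesgue [CompactSpace T] [R1Space T] {K : Set T}
    (hK : IsCompact K) {U : (x : T) → x ∈ K → Set T} (hU : ∀ x hx, U x hx ∈ 𝓝 x) :
    ∃ V : Set (T × T), (∀ x, V ∈ 𝓝 (x, x)) ∧ (∀ x y, (x, y) ∈ V → (y, x) ∈ V) ∧
      ∀ x ∈ K, ∃ y : K, {z | (x, z) ∈ V} ⊆ U y y.2 := by
  let _ : UniformSpace T := uniformSpaceOfCompactR1
  obtain ⟨V, hV, hVU⟩ := lebesgue_number_lemma_nhds' hK hU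
  refine ⟨V ∩ Prod.swap ⁻¹' V, fun x => nhds_le_uniformity x (inter_mem hV (symm_le_uniformity hV)),
    fun x y h => ⟨h.2, h.1⟩, fun x hx => ?_⟩
  obtain ⟨y, hy⟩ := hVU x hx
  exact ⟨y, fun z hz => hy hz.1⟩

variable {A : Set (Entourage T)}

/-- Points of `oᶜ` are separated from `p` by entourages of `A`; a Lebesgue number `V` for the
small neighbourhoods involved yields an entourage `w = o × o ∪ V` linked with every element of
the horosphere that is not small on `oᶜ`. -/
theorem entTendsto_horosphere [CompactSpace T] [R1Space T] (hdisc : DiscreteEnts A) {m k : ℕ}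
    (hsep : Separates A m) (hkm : k ≤ m) (p : T) : EntTendsto (horosphere A k p) p := by
  intro o ho hpo
  choose a haA hxp using fun x (hx : x ∈ oᶜ) => hsep x p fun h => hx (h ▸ hpo)
  choose U hU hUa using fun x (hx : x ∈ oᶜ) => (a x hx).exists_eSmall_mem_nhds x
  obtain ⟨V, hVnhds, hVsymm, hVU⟩ := exists_symm_nhds_diag_lebesgue ho.isClosed_compl.isCompact hU
  let w : Entourage T :=
    { carrier := o ×ˢ o ∪ V
      symm' := fun x y => Or.imp (fun h => ⟨h.2, h.1⟩) (hVsymm x y)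
      mem_nhds' := fun x => mem_of_superset (hVnhds x) subset_union_right }
  refine (hdisc w).subset fun e ⟨heH, hbad⟩ => ⟨heH.1, fun ⟨s, t, hs, ht, hst⟩ => ?_⟩
  obtain ⟨u, huo, hus⟩ := exists_mem_notMem_of_not_eSmall hbad hs
  have hut : u ∈ t := (hst ▸ mem_univ u : u ∈ s ∪ t).resolve_left hus
  obtain ⟨⟨x, hx⟩, hVx⟩ := hVU u huo
  have htU : t ⊆ U x hx := fun y hy => hVx ((ht u hut y hy).resolve_left fun h => huo h.1)
  have hta : eSmall (a x hx) t := (hUa x hx).mono htU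
  exact heH.2 ⟨a x hx, haA x hx, btwP_of_shadow_subset (hxp x hx) hkm (hU x hx) (hUa x hx)
    ⟨s, t, hs, hta, hst⟩ ((shadow_subset hs hta (compl_subset_iff_union.mpr hst)).trans htU)⟩

/-- With `c` a closed neighbourhood of `p` inside `o`, an entourage linked with some `e' ∈ B`
that is small on `(interior c)ᶜ` is linked with `w = o × o ∪ cᶜ × cᶜ`. -/
theorem EntTendsto.linked [RegularSpace T] (hdisc : DiscreteEnts A) {B : Set (Entourage T)}
    {p : T} (hB : EntTendsto B p) : EntTendsto {e ∈ A | ∃ e' ∈ B, EntLinked e e'} p := by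
  intro o ho hpo
  obtain ⟨c, hcp, hc, hco⟩ := exists_mem_nhds_isClosed_subset (ho.mem_nhds hpo)
  let w : Entourage T :=
    { carrier := o ×ˢ o ∪ cᶜ ×ˢ cᶜ
      symm' := fun x y => Or.imp (fun h => ⟨h.2, h.1⟩) (fun h => ⟨h.2, h.1⟩)
      mem_nhds' := fun x => by
        by_cases hx : x ∈ o
        · exact mem_of_superset ((ho.prod ho).mem_nhds ⟨hx, hx⟩) subset_union_left
        · have hx' : x ∈ cᶜ := fun h => hx (hco h)
          exact mem_of_superset ((hc.isOpen_compl.prod hc.isOpen_compl).mem_nhds ⟨hx', hx'⟩)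
            subset_union_right }
  have hB₀ := hB (interior c) isOpen_interior (mem_interior_iff_mem_nhds.mpr hcp)
  refine ((hdisc w).union (hB₀.biUnion fun e' _ => hdisc e')).subset ?_
  rintro e ⟨⟨heA, e', he'B, hee'⟩, hbad⟩
  by_cases he' : eSmall e' (interior c)ᶜ
  · refine Or.inl ⟨heA, fun ⟨s, t, hs, ht, hst⟩ => hbad (hs.mono ?_)⟩
    have hsc : ¬ eSmall e' sᶜ := fun h => hee' ⟨s, sᶜ, hs, h, union_compl_self s⟩
    obtain ⟨u, hus, hu⟩ := exists_mem_notMem_of_not_eSmall hsc he'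
    have hut : u ∈ t := compl_subset_iff_union.mpr hst hus
    have huc : u ∈ c := interior_subset (not_not.mp hu)
    have hto : t ⊆ o := fun y hy => ((ht u hut y hy).resolve_right fun h => h.1 huc).2
    exact compl_subset_comm.mp ((compl_subset_iff_union.mpr hst).trans hto)
  · exact Or.inr (mem_biUnion ⟨he'B, he'⟩ ⟨heA, hee'⟩)

lemma anbhd_zero_subset (S : Set (Entourage T)) : Anbhd A 0 S ⊆ S := by
  rintro e ⟨-, b, hb, c, hc0, hc, -⟩
  exact hc0 ▸ hc ▸ hb

lemma anbhd_succ_subset (S : Set (Entourage T)) (d : ℕ) :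
    Anbhd A (d + 1) S ⊆ {e ∈ A | ∃ e' ∈ Anbhd A d S, EntLinked e e'} := by
  rintro e ⟨heA, b, hb, c, hc0, hcd, hcA, hcl⟩
  refine ⟨heA, c 1, ⟨hcA 1 (by omega), b, hb, fun i => c (i + 1), rfl, hcd,
    fun i hi => hcA (i + 1) (by omega), fun i hi => hcl (i + 1) (by omega)⟩, ?_⟩
  exact hc0 ▸ hcl 0 (by omega)

theorem EntTendsto.anbhd [RegularSpace T] (hdisc : DiscreteEnts A) {S : Set (Entourage T)}
    {p : T} (hS : EntTendsto S p) (d : ℕ) : EntTendsto (Anbhd A d S) p := by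
  induction d with
  | zero => exact hS.mono (anbhd_zero_subset S)
  | succ d ih => exact (ih.linked hdisc).mono (anbhd_succ_subset S d)

lemma subset_anbhd {S : Set (Entourage T)} (hSA : S ⊆ A) (hS : ∀ e ∈ S, EntLinked e e)
    (d : ℕ) : S ⊆ Anbhd A d S :=
  fun e he => ⟨hSA he, e, he, fun _ => e, rfl, rfl, fun _ _ => hSA he, fun _ _ => hS e he⟩

lemma isOpen_tildeTop_inr_singleton (e : ↥A) : IsOpen[tildeTop A] {Sum.inr e} :=
  TopologicalSpace.isOpen_generateFrom_of_mem (Or.inl ⟨e, rfl⟩)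

lemma isOpen_tildeTop_hull {o : Set T} (ho : IsOpen o) :
    IsOpen[tildeTop A] (Sum.inl '' o ∪ Sum.inr '' {e : ↥A | eSmall ↑e oᶜ}) :=
  TopologicalSpace.isOpen_generateFrom_of_mem (Or.inr ⟨o, ho, rfl⟩)

lemma tendsto_inr_tildeTop {N : Set (Entourage T)} {p : T} (hN : EntTendsto N p) :
    Tendsto (Sum.inr : ↥A → T ⊕ ↥A) (cofinite ⊓ 𝓟 {e | ↑e ∈ N})
      (@nhds _ (tildeTop A) (Sum.inl p)) := by
  refine TopologicalSpace.tendsto_nhds_generateFrom_iff.mpr ?_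
  rintro _ (⟨e, rfl⟩ | ⟨o, ho, rfl⟩) hp
  · simp at hp
  · have hpo : p ∈ o := by simpa using hp
    refine mem_inf_principal.mpr (((hN o ho hpo).preimage Subtype.val_injective.injOn).subset ?_)
    intro e he
    simp_all

theorem inl_mem_accPts {N : Set (Entourage T)} (hNA : N ⊆ A) (hN : N.Infinite) {p : T}
    (hNp : EntTendsto N p) :
    Sum.inl p ∈ @accPts _ (tildeTop A) (Sum.inr '' {e : ↥A | ↑e ∈ N}) := by
  have hinf : {e : ↥A | ↑e ∈ N}.Infinite := fun hfin =>
    hN ((hfin.image Subtype.val).subset fun e he => ⟨⟨e, hNA he⟩, he, rfl⟩)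
  let _ := tildeTop A
  have := hinf.cofinite_inf_principal_neBot
  refine mem_closure_of_tendsto (tendsto_inr_tildeTop hNp) ?_
  exact mem_inf_of_right (fun e he => ⟨⟨e, he, rfl⟩, Sum.inr_ne_inl⟩)

/-- A separating neighbourhood `o` of `q` is shrunk so that `oᶜ` is not small for the finitely
many elements of `N` that are not small on the complement of a neighbourhood of `p` disjoint
from `o`; its hull then misses `N`, since no element of `N` is small on two sets covering `T`. -/
theorem inl_notMem_accPts [T2Space T] {N : Set (Entourage T)} (hlink : ∀ e ∈ N, EntLinked e e)
    {p q : T} (hNp : EntTendsto N p) (hqp : q ≠ p) :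
    Sum.inl q ∉ @accPts _ (tildeTop A) (Sum.inr '' {e : ↥A | ↑e ∈ N}) := by
  obtain ⟨oq, op, hoq, hop, hqoq, hpop, hdisj⟩ := t2_separation hqp
  set F := {e ∈ N | ¬ eSmall e opᶜ}
  choose! o hoOpen hqo hoF using fun e (he : e ∈ F) =>
    (hlink e he.1).exists_isOpen_not_eSmall_compl q
  set o' := oq ∩ ⋂ e ∈ F, o e
  have ho' : IsOpen o' := hoq.inter ((hNp op hop hpop).isOpen_biInter hoOpen)
  intro hacc
  obtain ⟨_, hU, ⟨e, he, rfl⟩, -⟩ := (@mem_closure_iff _ (tildeTop A) _ _).mp hacc _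
    (isOpen_tildeTop_hull ho') (Or.inl ⟨q, ⟨hqoq, mem_iInter₂.mpr hqo⟩, rfl⟩)
  have hsm : eSmall (↑e : Entourage T) o'ᶜ := by
    obtain ⟨_, -, h⟩ | ⟨e', he', h⟩ := hU
    · exact absurd h Sum.inl_ne_inr
    · exact Sum.inr_injective h ▸ he'
  by_cases heF : (↑e : Entourage T) ∈ F
  · exact hoF _ heF (hsm.mono (compl_subset_compl.mpr fun x hx => mem_iInter₂.mp hx.2 _ heF))
  · have hop' : eSmall (↑e : Entourage T) opᶜ := not_not.mp fun h => heF ⟨he, h⟩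
    refine hlink _ he ⟨opᶜ, oqᶜ, hop', hsm.mono (compl_subset_compl.mpr inter_subset_left), ?_⟩
    rw [← compl_inter, hdisj.symm.inter_eq, compl_empty]

lemma inr_notMem_accPts (e : ↥A) (S : Set (T ⊕ ↥A)) :
    Sum.inr e ∉ @accPts _ (tildeTop A) S := fun he => by
  obtain ⟨_, rfl, -, hne⟩ := (@mem_closure_iff _ (tildeTop A) _ _).mp he _
    (isOpen_tildeTop_inr_singleton e) rfl
  exact hne rfl

theorem accPts_eq_singleton [T2Space T] {N : Set (Entourage T)} (hNA : N ⊆ A)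
    (hN : N.Infinite) (hlink : ∀ e ∈ N, EntLinked e e) {p : T} (hNp : EntTendsto N p) :
    @accPts _ (tildeTop A) (Sum.inr '' {e : ↥A | ↑e ∈ N}) = {Sum.inl p} := by
  ext (q | e)
  · by_cases hqp : q = p
    · simpa [hqp] using inl_mem_accPts hNA hN hNp
    · simpa [hqp] using inl_notMem_accPts hlink hNp hqp
  · simpa using inr_notMem_accPts e _

end

theorem parabolic_unique_accumulation_point_general
    {T : Type*} [TopologicalSpace T] [CompactSpace T] [T2Space T]
    (A : Set (Entourage T))
    (hgood : ∀ a ∈ A, GoodEnt a) (hdisc : DiscreteEnts A)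
    (m : ℕ) (hsep : Separates A m)
    (k : ℕ) (hkm : k ≤ m)
    (p : T) (hp : (horosphere A k p).Infinite) :
    ∀ d : ℕ, 0 < d →
      @accPts _ (tildeTop A)
          (Sum.inr '' {e : ↥A | (e : Entourage T) ∈ Anbhd A d (horosphere A k p)}) =
        {Sum.inl p} := by
  intro d _
  have hlink : ∀ e ∈ A, EntLinked e e := fun e he => (hgood e he).1
  have hHA : horosphere A k p ⊆ A := fun e he => he.1
  have hNA : Anbhd A d (horosphere A k p) ⊆ A := fun e he => he.1
  exact accPts_eq_singleton hNA (hp.mono (subset_anbhd hHA (fun e he => hlink e (hHA he)) d))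
    (fun e he => hlink e (hNA he)) ((entTendsto_horosphere hdisc hsep hkm p).anbhd hdisc d)

/-- Let `G` act 3-discontinuously and 2-cocompactly on a compactum `T`, with `A` the fixed
discrete `G`-orbit of entourages (satisfying the separation and generation conventions).
Then for every `d > 0`, a parabolic point `p` is the unique accumulation point in
`T̃ = T ⊔ A` of the `d`-neighborhood of the horosphere `T_{A,k}(p)`. -/
theorem parabolic_unique_accumulation_point {G : Type*} [Group G]
    {T : Type*} [TopologicalSpace T] [CompactSpace T] [T2Space T] (h3 : HasThreePts T)
    (ρ : G → T ≃ₜ T) (hρ : IsTopAction G T ρ)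
    (h3d : ThreeDisc fun (g : G) (x : T) => ρ g x)
    (h2c : TwoCocompact fun (g : G) (x : T) => ρ g x)
    (a₀ : Entourage T) (A : Set (Entourage T)) (hA : A = entOrbit ρ a₀)
    (hgood : ∀ a ∈ A, GoodEnt a) (hdisc : DiscreteEnts A)
    (m : ℕ) (hsep : Separates A m) (hgen : GeneratesFilter A)
    (k : ℕ) (hk3 : 3 < k) (hkm : k ≤ m)
    (p : T) (hp : (horosphere A k p).Infinite) :
    ∀ d : ℕ, 0 < d →
      @accPts _ (tildeTop A)
          (Sum.inr '' {e : ↥A | (e : Entourage T) ∈ Anbhd A d (horosphere A k p)}) =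
        {Sum.inl p} :=
  parabolic_unique_accumulation_point_general A hgood hdisc m hsep k hkm p hp

end RHG
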